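/- arXiv:2503.07166 — 2 statements merged into one kernel-verified Lean document; each statement's English description precedes it below -/
import Mathlib

section
/- Let T be a binary equireplicate r × c row-column design on v symbols with 2 ≤ r, 2 ≤ c and 1 ≤ v ≤ rc. Then λ_rc = e, λ_rr = c(e − 1)/(r − 1), and λ_cc = r(e − 1)/(c − 1), where e = rc/v. -/
/-!
Double counting over symbols. In a binary design a symbol `s` with replication number `k s`
lies in exactly `k s` rows and `k s` columns, so `∑ i j, |R i ∩ C j|` and `∑ i i', |R i ∩ R i'|`
both equal `∑ s, k s ^ 2`, which is `e * ∑ s, k s = e * r * c` when every `k s = e`. The diagonal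
terms `|R i| = c` take `r * c` of the row-row sum, leaving
`2 * ∑ i < i', |R i ∩ R i'| = r * c * (e - 1)`.
Columns are the rows of the transposed design.
-/

open Finset

/-- An `r × c` row-column design on `v` symbols is binary if no symbol occurs
twice in any row or in any column. -/
def IsBinaryDesign {r c v : ℕ} (T : Fin r × Fin c → Fin v) : Prop :=
  (∀ (i : Fin r) (j j' : Fin c), j ≠ j' → T (i, j) ≠ T (i, j')) ∧
  (∀ (j : Fin c) (i i' : Fin r), i ≠ i' → T (i, j) ≠ T (i', j))

/-- The replication number of a symbol `s`: the number of cells containing `s`. -/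
def replNum {r c v : ℕ} (T : Fin r × Fin c → Fin v) (s : Fin v) : ℕ :=
  (Finset.univ.filter (fun p : Fin r × Fin c => T p = s)).card

/-- The average replication number `e = rc/v` as a rational number. -/
def avgRepl (r c v : ℕ) : ℚ := ((r : ℚ) * (c : ℚ)) / (v : ℚ)

/-- A design is equireplicate if `e = rc/v` is an integer and every symbol has
replication number `e`. -/
def IsEquireplicate {r c v : ℕ} (T : Fin r × Fin c → Fin v) : Prop :=
  (avgRepl r c v).den = 1 ∧ ∀ s : Fin v, (replNum T s : ℚ) = avgRepl r c v

/-- A design is near equireplicate if `e = rc/v` is not an integer and every symbol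
has replication number `⌊e⌋` or `⌈e⌉`. -/
def IsNearEquireplicate {r c v : ℕ} (T : Fin r × Fin c → Fin v) : Prop :=
  (avgRepl r c v).den ≠ 1 ∧
  ∀ s : Fin v, (replNum T s : ℤ) = ⌊avgRepl r c v⌋ ∨ (replNum T s : ℤ) = ⌈avgRepl r c v⌉

/-- The set of symbols occurring in row `i`. -/
def rowSet {r c v : ℕ} (T : Fin r × Fin c → Fin v) (i : Fin r) : Finset (Fin v) :=
  Finset.univ.image (fun j : Fin c => T (i, j))

/-- The set of symbols occurring in column `j`. -/
def colSet {r c v : ℕ} (T : Fin r × Fin c → Fin v) (j : Fin c) : Finset (Fin v) :=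
  Finset.univ.image (fun i : Fin r => T (i, j))

/-- Average row-column intersection size `λ_rc`. -/
def lamRC {r c v : ℕ} (T : Fin r × Fin c → Fin v) : ℚ :=
  (∑ i : Fin r, ∑ j : Fin c, ((rowSet T i ∩ colSet T j).card : ℚ)) / ((r : ℚ) * (c : ℚ))

/-- Average row-row intersection size `λ_rr`. -/
def lamRR {r c v : ℕ} (T : Fin r × Fin c → Fin v) : ℚ :=
  (∑ p ∈ Finset.univ.filter (fun p : Fin r × Fin r => p.1 < p.2),
      ((rowSet T p.1 ∩ rowSet T p.2).card : ℚ)) / ((r : ℚ) * ((r : ℚ) - 1) / 2)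

/-- Average column-column intersection size `λ_cc`. -/
def lamCC {r c v : ℕ} (T : Fin r × Fin c → Fin v) : ℚ :=
  (∑ p ∈ Finset.univ.filter (fun p : Fin c × Fin c => p.1 < p.2),
      ((colSet T p.1 ∩ colSet T p.2).card : ℚ)) / ((c : ℚ) * ((c : ℚ) - 1) / 2)

/-- An `(r × c, v)`-near triple array. -/
def IsNearTripleArray {r c v : ℕ} (T : Fin r × Fin c → Fin v) : Prop :=
  IsBinaryDesign T ∧ (IsEquireplicate T ∨ IsNearEquireplicate T) ∧
  (∀ (i : Fin r) (j : Fin c),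
    ((rowSet T i ∩ colSet T j).card : ℤ) = ⌊lamRC T⌋ ∨
    ((rowSet T i ∩ colSet T j).card : ℤ) = ⌈lamRC T⌉) ∧
  (∀ i j : Fin r, i ≠ j →
    ((rowSet T i ∩ rowSet T j).card : ℤ) = ⌊lamRR T⌋ ∨
    ((rowSet T i ∩ rowSet T j).card : ℤ) = ⌈lamRR T⌉) ∧
  (∀ i j : Fin c, i ≠ j →
    ((colSet T i ∩ colSet T j).card : ℤ) = ⌊lamCC T⌋ ∨
    ((colSet T i ∩ colSet T j).card : ℤ) = ⌈lamCC T⌉)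

theorem Finset.sum_sum_card_inter {ι κ α : Type*} [Fintype ι] [Fintype κ] [Fintype α]
    [DecidableEq α] (A : ι → Finset α) (B : κ → Finset α) :
    ∑ i, ∑ j, #(A i ∩ B j) = ∑ a, #{i | a ∈ A i} * #{j | a ∈ B j} := by
  have hinter (i : ι) (j : κ) :
      #(A i ∩ B j) = ∑ a, (if a ∈ A i then (1 : ℕ) else 0) * (if a ∈ B j then 1 else 0) := by
    simp_rw [ite_zero_mul_ite_zero, mul_one, ← mem_inter, sum_ite_mem, univ_inter, card_eq_sum_ones]
  simp_rw [hinter, card_filter, sum_mul_sum]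
  exact (sum_congr rfl fun _ _ => sum_comm).trans sum_comm

theorem Fintype.sum_sum_eq_two_nsmul_sum_lt_add_sum_diag {ι M : Type*} [Fintype ι]
    [LinearOrder ι] [AddCommMonoid M] (f : ι → ι → M) (hf : ∀ i j, f i j = f j i) :
    ∑ i, ∑ j, f i j = 2 • ∑ p : ι × ι with p.1 < p.2, f p.1 p.2 + ∑ i, f i i := by
  have hswap : ∑ p : ι × ι with p.2 < p.1, f p.1 p.2 = ∑ p : ι × ι with p.1 < p.2, f p.1 p.2 :=
    sum_nbij' Prod.swap Prod.swap (by simp) (by simp) (by simp) (by simp) (fun p _ => hf _ _)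
  have hdiag : ∑ p : ι × ι with p.1 = p.2, f p.1 p.2 = ∑ i, f i i := by
    rw [sum_filter, Fintype.sum_prod_type]
    simp
  have hrest : ∑ p : ι × ι with ¬p.1 < p.2, f p.1 p.2
      = ∑ p : ι × ι with p.2 < p.1, f p.1 p.2 + ∑ p : ι × ι with p.1 = p.2, f p.1 p.2 := by
    rw [← sum_filter_add_sum_filter_not _ (fun p : ι × ι => p.2 < p.1), filter_filter,
      filter_filter]
    congr 2 <;> ext p <;> simp only [mem_filter, mem_univ, true_and] <;> grind
  rw [← Fintype.sum_prod_type', ← sum_filter_add_sum_filter_not univ (fun p : ι × ι => p.1 < p.2),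
    hrest, hswap, hdiag, two_nsmul, add_assoc]

def transpose {r c v : ℕ} (T : Fin r × Fin c → Fin v) : Fin c × Fin r → Fin v :=
  T ∘ Prod.swap

section Design

variable {r c v : ℕ} {T : Fin r × Fin c → Fin v}

theorem IsBinaryDesign.transpose (hT : IsBinaryDesign T) : IsBinaryDesign (transpose T) :=
  ⟨hT.2, hT.1⟩

variable (T) in
theorem replNum_transpose (s : Fin v) : replNum (transpose T) s = replNum T s := by
  unfold replNum transpose
  exact card_nbij' Prod.swap Prod.swap (fun _ => by simp) (fun _ => by simp)
    (fun _ _ => rfl) (fun _ _ => rfl)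

variable (T) in
theorem lamCC_eq_lamRR_transpose : lamCC T = lamRR (transpose T) := rfl

variable (T) in
theorem sum_replNum : ∑ s, replNum T s = r * c := by
  simp_rw [replNum, ← card_eq_sum_card_fiberwise (fun p _ => mem_univ (T p)), card_univ,
    Fintype.card_prod, Fintype.card_fin]

theorem IsBinaryDesign.card_rowSet (hT : IsBinaryDesign T) (i : Fin r) : #(rowSet T i) = c := by
  have hinj : Function.Injective fun j => T (i, j) := fun j j' h => by
    by_contra hne
    exact hT.1 i j j' hne h
  rw [rowSet, card_image_of_injective _ hinj, card_univ, Fintype.card_fin]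

theorem IsBinaryDesign.card_filter_mem_rowSet (hT : IsBinaryDesign T) (s : Fin v) :
    #{i | s ∈ rowSet T i} = replNum T s := by
  refine (card_nbij Prod.fst ?_ ?_ ?_).symm
  · rintro ⟨i, j⟩ h
    simp only [coe_filter, mem_univ, true_and, Set.mem_ofPred_eq, rowSet, mem_image] at h ⊢
    exact ⟨j, h⟩
  · rintro ⟨i, j⟩ h ⟨_, j'⟩ h' rfl
    simp only [coe_filter, mem_univ, true_and, Set.mem_ofPred_eq] at h h'
    exact Prod.ext rfl (not_not.1 fun hne => hT.1 i j j' hne (h.trans h'.symm))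
  · intro i hi
    simp only [coe_filter, mem_univ, true_and, Set.mem_ofPred_eq, rowSet, mem_image] at hi
    obtain ⟨j, hj⟩ := hi
    exact ⟨(i, j), by simpa using hj, rfl⟩

theorem IsBinaryDesign.card_filter_mem_colSet (hT : IsBinaryDesign T) (s : Fin v) :
    #{j | s ∈ colSet T j} = replNum T s := by
  rw [← replNum_transpose]
  exact hT.transpose.card_filter_mem_rowSet s

theorem IsBinaryDesign.sum_card_rowSet_inter_colSet (hT : IsBinaryDesign T) :
    ∑ i, ∑ j, #(rowSet T i ∩ colSet T j) = ∑ s, replNum T s ^ 2 := by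
  simp_rw [sum_sum_card_inter, hT.card_filter_mem_rowSet, hT.card_filter_mem_colSet, sq]

theorem IsBinaryDesign.sum_card_rowSet_inter_rowSet (hT : IsBinaryDesign T) :
    ∑ i, ∑ i', #(rowSet T i ∩ rowSet T i') = ∑ s, replNum T s ^ 2 := by
  simp_rw [sum_sum_card_inter, hT.card_filter_mem_rowSet, sq]

theorem sum_replNum_sq_of_replNum_eq {e : ℚ} (he : ∀ s, (replNum T s : ℚ) = e) :
    ∑ s, (replNum T s : ℚ) ^ 2 = e * (r * c) := by
  have hsum : ∑ s, (replNum T s : ℚ) = r * c := by exact_mod_cast sum_replNum T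
  calc ∑ s, (replNum T s : ℚ) ^ 2 = ∑ s, e * replNum T s := sum_congr rfl fun s _ => by
        rw [sq, he]
    _ = e * (r * c) := by rw [← mul_sum, hsum]

theorem IsBinaryDesign.lamRC_eq (hT : IsBinaryDesign T) (hr : r ≠ 0) (hc : c ≠ 0) {e : ℚ}
    (he : ∀ s, (replNum T s : ℚ) = e) : lamRC T = e := by
  have hsum : ∑ i, ∑ j, (#(rowSet T i ∩ colSet T j) : ℚ) = e * (r * c) := by
    rw [← sum_replNum_sq_of_replNum_eq he]
    exact_mod_cast hT.sum_card_rowSet_inter_colSet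
  rw [lamRC, hsum]
  field_simp

theorem IsBinaryDesign.lamRR_eq (hT : IsBinaryDesign T) (hr : 1 < r) {e : ℚ}
    (he : ∀ s, (replNum T s : ℚ) = e) : lamRR T = c * (e - 1) / (r - 1) := by
  have hsum : ∑ i, ∑ i', (#(rowSet T i ∩ rowSet T i') : ℚ) = e * (r * c) := by
    rw [← sum_replNum_sq_of_replNum_eq he]
    exact_mod_cast hT.sum_card_rowSet_inter_rowSet
  have hpairs := Fintype.sum_sum_eq_two_nsmul_sum_lt_add_sum_diag
    (fun i i' => (#(rowSet T i ∩ rowSet T i') : ℚ)) fun i i' => by rw [inter_comm]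
  simp only [inter_self, hT.card_rowSet, sum_const, card_univ, Fintype.card_fin, nsmul_eq_mul,
    Nat.cast_ofNat, hsum] at hpairs
  have hr1 : (r : ℚ) - 1 ≠ 0 := sub_ne_zero.2 (by exact_mod_cast hr.ne')
  have hr0 : (r : ℚ) ≠ 0 := by positivity
  rw [lamRR]
  field_simp
  linarith

end Design

theorem lambda_of_equireplicate_general {r c v : ℕ} (hr : 2 ≤ r) (hc : 2 ≤ c)
    (T : Fin r × Fin c → Fin v) (hbin : IsBinaryDesign T)
    (heq : IsEquireplicate T) :
    lamRC T = avgRepl r c v ∧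
    lamRR T = (c : ℚ) * (avgRepl r c v - 1) / ((r : ℚ) - 1) ∧
    lamCC T = (r : ℚ) * (avgRepl r c v - 1) / ((c : ℚ) - 1) := by
  have heqT : ∀ s, (replNum (transpose T) s : ℚ) = avgRepl r c v := fun s => by
    rw [replNum_transpose]
    exact heq.2 s
  refine ⟨hbin.lamRC_eq (by omega) (by omega) heq.2, hbin.lamRR_eq hr heq.2, ?_⟩
  rw [lamCC_eq_lamRR_transpose]
  exact hbin.transpose.lamRR_eq hc heqT

/-- For a binary equireplicate design, `λ_rc = e`,
`λ_rr = c(e − 1)/(r − 1)` and `λ_cc = r(e − 1)/(c − 1)`. -/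
theorem lambda_of_equireplicate {r c v : ℕ} (hr : 2 ≤ r) (hc : 2 ≤ c)
    (hv1 : 1 ≤ v) (hv2 : v ≤ r * c)
    (T : Fin r × Fin c → Fin v) (hbin : IsBinaryDesign T)
    (heq : IsEquireplicate T) :
    lamRC T = avgRepl r c v ∧
    lamRR T = (c : ℚ) * (avgRepl r c v - 1) / ((r : ℚ) - 1) ∧
    lamCC T = (r : ℚ) * (avgRepl r c v - 1) / ((c : ℚ) - 1) :=
  lambda_of_equireplicate_general hr hc T hbin heq
end

section
/- For all natural numbers r, c, v with 2 ≤ r, 2 ≤ c and 2rc − c ≤ 2v, v ≤ rc, there exists an (r × c, v)-near triple array. -/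
open Finset

/-!
Put `d = rc - v`, so that `2d ≤ c`. Let `(a_k, b_k)` run cyclically through the pairs of rows
`a < b`. Symbol `k < d` is placed twice, at `(a_k, 2k)` and at `(b_k, 2k + 1)`, and every other
cell receives its own symbol. Then every replication number is 1 or 2, a row and a column share 1
or 2 symbols, two columns share at most one, and rows `a < b` share as many symbols as there are
`k < d` with `(a_k, b_k) = (a, b)`, a count that the cyclic order keeps within one of `d / P` for
`P` the number of pairs of rows. A quantity taking only two consecutive values always equals the
floor or the ceiling of its average.
-/

theorem cast_eq_floor_or_ceil_average {α : Type*} {s : Finset α} {t : α → ℕ} {m : ℕ}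
    (h : ∀ b ∈ s, t b = m ∨ t b = m + 1) {a : α} (ha : a ∈ s) :
    (t a : ℤ) = ⌊(∑ b ∈ s, (t b : ℚ)) / #s⌋ ∨ (t a : ℤ) = ⌈(∑ b ∈ s, (t b : ℚ)) / #s⌉ := by
  have hs : (0 : ℚ) < #s := by exact_mod_cast card_pos.mpr ⟨a, ha⟩
  have lower : ∀ b ∈ s, (m : ℚ) ≤ t b := fun b hb => by rcases h b hb with e | e <;> simp [e]
  have upper : ∀ b ∈ s, (t b : ℚ) ≤ m + 1 := fun b hb => by rcases h b hb with e | e <;> simp [e]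
  rcases h a ha with e | e
  · have hle : ∑ b ∈ s, (m : ℚ) ≤ ∑ b ∈ s, (t b : ℚ) := sum_le_sum lower
    have hlt : ∑ b ∈ s, (t b : ℚ) < ∑ b ∈ s, ((m : ℚ) + 1) :=
      sum_lt_sum upper ⟨a, ha, by simp [e]⟩
    rw [sum_const, nsmul_eq_mul] at hle hlt
    left
    rw [e, eq_comm, Int.floor_eq_iff, le_div_iff₀ hs, div_lt_iff₀ hs]
    push_cast
    constructor <;> linarith
  · have hlt : ∑ b ∈ s, (m : ℚ) < ∑ b ∈ s, (t b : ℚ) := sum_lt_sum lower ⟨a, ha, by simp [e]⟩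
    have hle : ∑ b ∈ s, (t b : ℚ) ≤ ∑ b ∈ s, ((m : ℚ) + 1) := sum_le_sum upper
    rw [sum_const, nsmul_eq_mul] at hle hlt
    right
    rw [e, eq_comm, Int.ceil_eq_iff, div_le_iff₀ hs, lt_div_iff₀ hs]
    push_cast
    constructor <;> linarith

section Design

variable {r c v : ℕ} (T : Fin r × Fin c → Fin v)

theorem mem_rowSet {i : Fin r} {s : Fin v} : s ∈ rowSet T i ↔ ∃ j, T (i, j) = s := by
  simp [rowSet]

theorem mem_colSet {j : Fin c} {s : Fin v} : s ∈ colSet T j ↔ ∃ i, T (i, j) = s := by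
  simp [colSet]

theorem avgRepl_eq_average :
    avgRepl r c v = (∑ s, (replNum T s : ℚ)) / #(univ : Finset (Fin v)) := by
  have hsum : ∑ s, replNum T s = r * c := by
    simpa [replNum] using
      (card_eq_sum_card_fiberwise (f := T) (s := univ) (t := univ) (by simp)).symm
  rw [avgRepl, ← Nat.cast_sum, hsum]
  simp

theorem lamRC_eq_average :
    lamRC T = (∑ p : Fin r × Fin c, (#(rowSet T p.1 ∩ colSet T p.2) : ℚ)) /
      #(univ : Finset (Fin r × Fin c)) := by
  rw [lamRC, Fintype.sum_prod_type]
  simp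

theorem lamRR_eq_average :
    lamRR T = (∑ p ∈ {p : Fin r × Fin r | p.1 < p.2}, (#(rowSet T p.1 ∩ rowSet T p.2) : ℚ)) /
      #{p : Fin r × Fin r | p.1 < p.2} := by
  rw [lamRR, Fintype.card_product_filter_lt, Nat.cast_choose_two, Fintype.card_fin]

theorem lamCC_eq_average :
    lamCC T = (∑ p ∈ {p : Fin c × Fin c | p.1 < p.2}, (#(colSet T p.1 ∩ colSet T p.2) : ℚ)) /
      #{p : Fin c × Fin c | p.1 < p.2} := by
  rw [lamCC, Fintype.card_product_filter_lt, Nat.cast_choose_two, Fintype.card_fin]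

end Design

theorem intCast_eq_of_den_eq_one_of_eq_floor_or_ceil {q : ℚ} (hq : q.den = 1) {n : ℤ}
    (h : n = ⌊q⌋ ∨ n = ⌈q⌉) : (n : ℚ) = q := by
  rw [← Rat.coe_int_num_of_den_eq_one hq, Int.floor_intCast, Int.ceil_intCast, or_self] at h
  rw [h, Rat.coe_int_num_of_den_eq_one hq]

theorem cast_card_inter_eq_floor_or_ceil_average {n v : ℕ} {S : Fin n → Finset (Fin v)} {m : ℕ}
    (h : ∀ i j, i < j → #(S i ∩ S j) = m ∨ #(S i ∩ S j) = m + 1) {i j : Fin n} (hij : i ≠ j) :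
    (#(S i ∩ S j) : ℤ) = ⌊(∑ p ∈ {p : Fin n × Fin n | p.1 < p.2}, (#(S p.1 ∩ S p.2) : ℚ)) /
      #{p : Fin n × Fin n | p.1 < p.2}⌋ ∨
    (#(S i ∩ S j) : ℤ) = ⌈(∑ p ∈ {p : Fin n × Fin n | p.1 < p.2}, (#(S p.1 ∩ S p.2) : ℚ)) /
      #{p : Fin n × Fin n | p.1 < p.2}⌉ := by
  have key : ∀ p ∈ ({p : Fin n × Fin n | p.1 < p.2} : Finset _),
      #(S p.1 ∩ S p.2) = m ∨ #(S p.1 ∩ S p.2) = m + 1 := fun p hp => h _ _ (by simpa using hp)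
  rcases hij.lt_or_gt with hlt | hlt
  · exact cast_eq_floor_or_ceil_average (t := fun p => #(S p.1 ∩ S p.2)) key
      (a := (i, j)) (by simpa using hlt)
  · rw [inter_comm]
    exact cast_eq_floor_or_ceil_average (t := fun p => #(S p.1 ∩ S p.2)) key
      (a := (j, i)) (by simpa using hlt)

theorem isNearTripleArray_of_two_valued {r c v : ℕ} {T : Fin r × Fin c → Fin v}
    (hbin : IsBinaryDesign T) {m₁ m₂ m₃ m₄ : ℕ}
    (hrepl : ∀ s, replNum T s = m₁ ∨ replNum T s = m₁ + 1)
    (hrc : ∀ i j, #(rowSet T i ∩ colSet T j) = m₂ ∨ #(rowSet T i ∩ colSet T j) = m₂ + 1)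
    (hrr : ∀ i i', i < i' →
      #(rowSet T i ∩ rowSet T i') = m₃ ∨ #(rowSet T i ∩ rowSet T i') = m₃ + 1)
    (hcc : ∀ j j', j < j' →
      #(colSet T j ∩ colSet T j') = m₄ ∨ #(colSet T j ∩ colSet T j') = m₄ + 1) :
    IsNearTripleArray T := by
  have hrepl' (s : Fin v) : (replNum T s : ℤ) = ⌊avgRepl r c v⌋ ∨
      (replNum T s : ℤ) = ⌈avgRepl r c v⌉ := by
    rw [avgRepl_eq_average]
    exact cast_eq_floor_or_ceil_average (fun s _ => hrepl s) (mem_univ s)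
  refine ⟨hbin, ?_, fun i j => ?_, fun i i' h => ?_, fun j j' h => ?_⟩
  · by_cases hden : (avgRepl r c v).den = 1
    · exact .inl ⟨hden, fun s => by
        exact_mod_cast intCast_eq_of_den_eq_one_of_eq_floor_or_ceil hden (hrepl' s)⟩
    · exact .inr ⟨hden, hrepl'⟩
  · rw [lamRC_eq_average]
    exact cast_eq_floor_or_ceil_average (t := fun p => #(rowSet T p.1 ∩ colSet T p.2))
      (fun p _ => hrc p.1 p.2) (mem_univ (i, j))
  · rw [lamRR_eq_average]
    exact cast_card_inter_eq_floor_or_ceil_average hrr h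
  · rw [lamCC_eq_average]
    exact cast_card_inter_eq_floor_or_ceil_average hcc h

theorem exists_surjective_fin_eq_iff {α β : Type*} [Fintype α] [DecidableEq β] (f : α → β)
    {n : ℕ} (hn : #(univ.image f) = n) :
    ∃ T : α → Fin n, Function.Surjective T ∧ ∀ p q, T p = T q ↔ f p = f q := by
  let e := (univ.image f).equivFinOfCardEq hn
  refine ⟨fun a => e ⟨f a, mem_image_of_mem f (mem_univ a)⟩, fun k => ?_, fun p q => ?_⟩
  · obtain ⟨⟨b, hb⟩, rfl⟩ := e.surjective k
    obtain ⟨a, -, rfl⟩ := mem_image.mp hb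
    exact ⟨a, rfl⟩
  · simp [e.injective.eq_iff]

theorem exists_seq_card_fiber_eq_or_eq_succ (ι : Type*) [Fintype ι] [DecidableEq ι] [Nonempty ι]
    (d : ℕ) :
    ∃ f : ℕ → ι, ∃ m, ∀ x, #{k ∈ range d | f k = x} = m ∨ #{k ∈ range d | f k = x} = m + 1 := by
  set n := Fintype.card ι
  have hn : 0 < n := Fintype.card_pos
  let e := Fintype.equivFin ι
  refine ⟨fun k => e.symm ⟨k % n, Nat.mod_lt k hn⟩, d / n, fun x => ?_⟩
  have hfiber : #{k ∈ range d | e.symm ⟨k % n, Nat.mod_lt k hn⟩ = x} =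
      d.count (· ≡ e x [MOD n]) := by
    rw [Nat.count_eq_card_filter_range]
    refine congrArg card (filter_congr fun k _ => ?_)
    have hx : (e x : ℕ) % n = e x := Nat.mod_eq_of_lt (e x).isLt
    simp [Equiv.symm_apply_eq, Fin.ext_iff, Nat.ModEq, hx]
  rw [hfiber, Nat.count_modEq_card _ hn]
  split_ifs <;> simp

section PairedDesign

variable {r c : ℕ} (pair : ℕ → Fin r × Fin r) (d : ℕ)

/-- The row of the doubly used cell in column `j`: with `pair k = (a, b)`, it is `a` in column
`2k` and `b` in column `2k + 1`. -/
def pairedRow (j : ℕ) : Fin r := if j % 2 = 0 then (pair (j / 2)).1 else (pair (j / 2)).2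

def pairedCells : Finset (Fin r × Fin c) := {p | (p.2 : ℕ) < 2 * d ∧ p.1 = pairedRow pair p.2}

def IsPairedDesign {v : ℕ} (T : Fin r × Fin c → Fin v) : Prop :=
  ∀ p q, T p = T q ↔
    p = q ∨ (p ∈ pairedCells pair d ∧ q ∈ pairedCells pair d ∧ (p.2 : ℕ) / 2 = q.2 / 2)

variable {pair d}

theorem mem_pairedCells {p : Fin r × Fin c} :
    p ∈ pairedCells pair d ↔ (p.2 : ℕ) < 2 * d ∧ p.1 = pairedRow pair p.2 := by
  simp [pairedCells]

theorem card_pairedCells (h2d : 2 * d ≤ c) : #(pairedCells (c := c) pair d) = 2 * d := by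
  rw [← min_eq_right h2d, ← Fin.card_filter_val_lt]
  refine card_nbij' Prod.snd (fun j => (pairedRow pair j, j)) ?_ ?_ ?_ ?_ <;>
    intro <;> simp +contextual [mem_pairedCells, Prod.ext_iff]

theorem exists_isPairedDesign (h2d : 2 * d ≤ c) {v : ℕ} (hv : r * c = v + d) :
    ∃ T : Fin r × Fin c → Fin v, Function.Surjective T ∧ IsPairedDesign pair d T := by
  let key (p : Fin r × Fin c) : ℕ ⊕ (Fin r × Fin c) :=
    if p ∈ pairedCells pair d then .inl (p.2 / 2) else .inr p
  have himage : univ.image key =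
      (range d).map Function.Embedding.inl ∪ (pairedCells pair d)ᶜ.map Function.Embedding.inr := by
    ext (k | q)
    · simp only [mem_image, mem_univ, true_and, mem_union, mem_map, mem_range,
        Function.Embedding.inl_apply, Sum.inl.injEq, exists_eq_right, mem_compl,
        Function.Embedding.inr_apply, reduceCtorEq, and_false, exists_false, or_false, key]
      constructor
      · rintro ⟨p, h⟩
        split_ifs at h with hmem
        cases h
        have := (mem_pairedCells.mp hmem).1
        omega
      · intro hk
        refine ⟨(pairedRow pair (2 * k), ⟨2 * k, by omega⟩), ?_⟩
        rw [if_pos (mem_pairedCells.mpr ⟨show 2 * k < 2 * d by omega, rfl⟩)]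
        simp
    · simp only [mem_image, mem_univ, true_and, mem_union, mem_map, mem_range,
        Function.Embedding.inl_apply, reduceCtorEq, and_false, exists_const, mem_compl,
        Function.Embedding.inr_apply, Sum.inr.injEq, exists_eq_right, false_or, key]
      constructor
      · rintro ⟨p, h⟩
        split_ifs at h with hmem
        cases h
        exact hmem
      · intro hq
        exact ⟨q, if_neg hq⟩
  have hcard : #(univ.image key) = v := by
    have hc : 2 * d ≤ r * c := by
      rcases Nat.eq_zero_or_pos r with rfl | hr
      · omega
      · exact h2d.trans (Nat.le_mul_of_pos_left c hr)
    rw [himage, card_union_of_disjoint (by simp [disjoint_left]), card_map, card_map, card_range,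
      card_compl, card_pairedCells h2d, Fintype.card_prod, Fintype.card_fin, Fintype.card_fin]
    omega
  obtain ⟨T, hsurj, hT⟩ := exists_surjective_fin_eq_iff key hcard
  refine ⟨T, hsurj, fun p q => (hT p q).trans ?_⟩
  simp only [key]
  split_ifs <;> grind

@[simp]
theorem pairedRow_two_mul (k : ℕ) : pairedRow pair (2 * k) = (pair k).1 := by
  simp [pairedRow]

@[simp]
theorem pairedRow_two_mul_add_one (k : ℕ) : pairedRow pair (2 * k + 1) = (pair k).2 := by
  simp [pairedRow, Nat.add_mod, show (2 * k + 1) / 2 = k by omega]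

theorem pairedRow_ne_of_div_two_eq (hpair : ∀ k, (pair k).1 < (pair k).2) {j j' : ℕ}
    (h : j / 2 = j' / 2) (hne : j ≠ j') :
    pairedRow pair j ≠ pairedRow pair j' := by
  have hlt := hpair (j / 2)
  unfold pairedRow
  rw [← h]
  split_ifs <;> omega

theorem pair_div_two_eq_of_pairedRow_lt (hpair : ∀ k, (pair k).1 < (pair k).2) {j j' : ℕ}
    (h : j / 2 = j' / 2) (hlt : pairedRow pair j < pairedRow pair j') :
    j % 2 = 0 ∧ pair (j / 2) = (pairedRow pair j, pairedRow pair j') := by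
  have hpair' := hpair (j / 2)
  unfold pairedRow at hlt ⊢
  rw [← h] at hlt ⊢
  split_ifs at hlt ⊢ with h₁ h₂ h₂
  · exact absurd hlt (lt_irrefl _)
  · exact ⟨h₁, rfl⟩
  · exact absurd hlt hpair'.not_gt
  · exact absurd hlt (lt_irrefl _)

namespace IsPairedDesign

variable {v : ℕ} {T : Fin r × Fin c → Fin v} (hT : IsPairedDesign pair d T)
include hT

theorem isBinaryDesign (hpair : ∀ k, (pair k).1 < (pair k).2) : IsBinaryDesign T := by
  constructor
  · intro i j j' hne heq
    rcases (hT _ _).mp heq with h | ⟨hmem, hmem', hdiv⟩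
    · exact hne (Prod.ext_iff.mp h).2
    · exact pairedRow_ne_of_div_two_eq hpair hdiv (Fin.val_ne_of_ne hne)
        ((mem_pairedCells.mp hmem).2.symm.trans (mem_pairedCells.mp hmem').2)
  · intro j i i' hne heq
    rcases (hT _ _).mp heq with h | ⟨hmem, hmem', -⟩
    · exact hne (Prod.ext_iff.mp h).1
    · exact hne ((mem_pairedCells.mp hmem).2.trans (mem_pairedCells.mp hmem').2.symm)

theorem replNum_eq_one_or_two (hsurj : Function.Surjective T) (s : Fin v) :
    replNum T s = 1 ∨ replNum T s = 1 + 1 := by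
  obtain ⟨p, rfl⟩ := hsurj s
  have hpos : 0 < replNum T (T p) := card_pos.mpr ⟨p, by simp⟩
  have hle : replNum T (T p) ≤ 2 := by
    refine (card_le_card_of_injOn (fun q => (q.2 : ℕ) % 2) (t := range 2)
      (fun q _ => mem_range.mpr (Nat.mod_lt _ two_pos)) fun q hq q' hq' hmod => ?_).trans_eq
      (card_range 2)
    simp only [coe_filter, mem_univ, true_and, Set.mem_ofPred_eq] at hq hq'
    rcases (hT q q').mp (hq.trans hq'.symm) with h | ⟨hmem, hmem', hdiv⟩
    · exact h
    · have hcol : q.2 = q'.2 := Fin.ext (by simp only at hmod; omega)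
      exact Prod.ext
        ((mem_pairedCells.mp hmem).2.trans (hcol ▸ (mem_pairedCells.mp hmem').2.symm)) hcol
  omega

theorem rowSet_inter_colSet_subset (i : Fin r) (j : Fin c) :
    rowSet T i ∩ colSet T j ⊆ {T (i, j), T (pairedRow pair j, j)} := by
  intro s hs
  obtain ⟨⟨j', rfl⟩, ⟨i', hi'⟩⟩ := And.imp (mem_rowSet T).mp (mem_colSet T).mp (mem_inter.mp hs)
  rcases (hT _ _).mp hi' with h | ⟨hmem, -, -⟩
  · obtain ⟨rfl, rfl⟩ := Prod.ext_iff.mp h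
    simp
  · simp [← hi', ← (mem_pairedCells.mp hmem).2]

theorem card_rowSet_inter_colSet (i : Fin r) (j : Fin c) :
    #(rowSet T i ∩ colSet T j) = 1 ∨ #(rowSet T i ∩ colSet T j) = 1 + 1 := by
  have hpos : 0 < #(rowSet T i ∩ colSet T j) :=
    card_pos.mpr
      ⟨T (i, j), mem_inter.mpr ⟨(mem_rowSet T).mpr ⟨j, rfl⟩, (mem_colSet T).mpr ⟨i, rfl⟩⟩⟩
  have hle := (card_le_card (hT.rowSet_inter_colSet_subset i j)).trans (card_insert_le _ _)
  rw [card_singleton] at hle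
  omega

theorem colSet_inter_colSet_subset {j j' : Fin c} (hne : j ≠ j') :
    colSet T j ∩ colSet T j' ⊆ {T (pairedRow pair j, j)} := by
  intro s hs
  obtain ⟨⟨i, rfl⟩, ⟨i', hi'⟩⟩ := And.imp (mem_colSet T).mp (mem_colSet T).mp (mem_inter.mp hs)
  rcases (hT _ _).mp hi'.symm with h | ⟨hmem, -, -⟩
  · exact absurd (Prod.ext_iff.mp h).2 hne
  · simp [← (mem_pairedCells.mp hmem).2]

theorem card_colSet_inter_colSet {j j' : Fin c} (hne : j ≠ j') :
    #(colSet T j ∩ colSet T j') = 0 ∨ #(colSet T j ∩ colSet T j') = 0 + 1 := by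
  have := card_le_card (hT.colSet_inter_colSet_subset hne)
  rw [card_singleton] at this
  omega

theorem card_rowSet_inter_rowSet (hpair : ∀ k, (pair k).1 < (pair k).2) (h2d : 2 * d ≤ c)
    {i i' : Fin r} (hlt : i < i') :
    #(rowSet T i ∩ rowSet T i') = #{k ∈ range d | pair k = (i, i')} := by
  have hcol {k : ℕ} (hk : k ∈ range d) : 2 * k < c := by rw [mem_range] at hk; omega
  refine (card_bij (fun k hk => T (i, ⟨2 * k, hcol (mem_filter.mp hk).1⟩)) ?_ ?_ ?_).symm
  · intro k hk
    obtain ⟨hkd, hk⟩ := mem_filter.mp hk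
    rw [mem_range] at hkd
    refine mem_inter.mpr
      ⟨(mem_rowSet T).mpr ⟨_, rfl⟩, (mem_rowSet T).mpr ⟨⟨2 * k + 1, by omega⟩, ?_⟩⟩
    refine (hT _ _).mpr (.inr ⟨?_, ?_, show (2 * k + 1) / 2 = 2 * k / 2 by omega⟩)
    · exact mem_pairedCells.mpr ⟨show 2 * k + 1 < 2 * d by omega, by simp [hk]⟩
    · exact mem_pairedCells.mpr ⟨show 2 * k < 2 * d by omega, by simp [hk]⟩
  · intro k hk k' hk' heq
    rcases (hT _ _).mp heq with h | ⟨-, -, hdiv⟩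
    · simpa using h
    · simpa using hdiv
  · intro s hs
    obtain ⟨⟨j, rfl⟩, ⟨j', hj'⟩⟩ := And.imp (mem_rowSet T).mp (mem_rowSet T).mp (mem_inter.mp hs)
    rcases (hT _ _).mp hj'.symm with h | ⟨hmem, hmem', hdiv⟩
    · exact absurd (Prod.ext_iff.mp h).1 hlt.ne
    · simp only [mem_pairedCells] at hmem hmem' hdiv
      rw [hmem.2, hmem'.2] at hlt
      obtain ⟨heven, hpair_eq⟩ := pair_div_two_eq_of_pairedRow_lt hpair hdiv hlt
      refine ⟨(j : ℕ) / 2, mem_filter.mpr ⟨mem_range.mpr (by omega), ?_⟩, ?_⟩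
      · rw [hpair_eq, ← hmem.2, ← hmem'.2]
      · congr
        omega

end IsPairedDesign

end PairedDesign

theorem exists_pair_seq_card_eq_or_eq_succ {r : ℕ} (hr : 2 ≤ r) (d : ℕ) :
    ∃ pair : ℕ → Fin r × Fin r, (∀ k, (pair k).1 < (pair k).2) ∧ ∃ m, ∀ i i' : Fin r, i < i' →
      #{k ∈ range d | pair k = (i, i')} = m ∨ #{k ∈ range d | pair k = (i, i')} = m + 1 := by
  have : Nonempty {q : Fin r × Fin r // q.1 < q.2} :=
    ⟨⟨(⟨0, by omega⟩, ⟨1, by omega⟩), by simp [Fin.lt_def]⟩⟩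
  obtain ⟨f, m, hf⟩ := exists_seq_card_fiber_eq_or_eq_succ {q : Fin r × Fin r // q.1 < q.2} d
  refine ⟨fun k => (f k).1, fun k => (f k).2, m, fun i i' h => ?_⟩
  have hfiber : #{k ∈ range d | (f k).1 = (i, i')} = #{k ∈ range d | f k = ⟨(i, i'), h⟩} := by
    simp [Subtype.ext_iff]
  exact hfiber ▸ hf _

theorem nearTripleArray_exists_tail_general {r c v : ℕ} (hr : 2 ≤ r)
    (hv1 : 2 * r * c - c ≤ 2 * v) (hv2 : v ≤ r * c) :
    ∃ T : Fin r × Fin c → Fin v, IsNearTripleArray T := by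
  set d := r * c - v
  have h2d : 2 * d ≤ c := by rw [mul_assoc] at hv1; omega
  obtain ⟨pair, hpair, m, hbalanced⟩ := exists_pair_seq_card_eq_or_eq_succ hr d
  obtain ⟨T, hsurj, hT⟩ := exists_isPairedDesign (pair := pair) h2d (v := v) (by omega)
  refine ⟨T, isNearTripleArray_of_two_valued (m₃ := m) (hT.isBinaryDesign hpair)
    (hT.replNum_eq_one_or_two hsurj) hT.card_rowSet_inter_colSet (fun i i' h => ?_)
    fun j j' h => hT.card_colSet_inter_colSet h.ne⟩
  rw [hT.card_rowSet_inter_rowSet hpair h2d h]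
  exact hbalanced i i' h

/-- For all `r, c, v` with `2 ≤ r`, `2 ≤ c`, `2rc − c ≤ 2v` and
`v ≤ rc`, an `(r × c, v)`-near triple array exists. -/
theorem nearTripleArray_exists_tail {r c v : ℕ} (hr : 2 ≤ r) (hc : 2 ≤ c)
    (hv1 : 2 * r * c - c ≤ 2 * v) (hv2 : v ≤ r * c) :
    ∃ T : Fin r × Fin c → Fin v, IsNearTripleArray T :=
  nearTripleArray_exists_tail_general hr hv1 hv2
end
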